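/- arXiv:1606.07655 — 2 statements merged into one kernel-verified Lean document; each statement's English description precedes it below -/
import Mathlib

section
/- Let K be a field, m, n positive integers, P ∈ GL(m,K), Q ∈ GL(n,K) and R an m×n matrix over K. Let M be the (m+n)×(m+n) block matrix with blocks P⁻¹ and P⁻¹R in the top row and 0 and Q in the bottom row. Then M is invertible, and for every m×n matrix A over K, the image of the row space of the m×(m+n) block matrix (I_m | A) under the linear map x ↦ x·M equals the row space of (I_m | P·A·Q + R). In other words, the lifting map Λ(A) = rowspace(I_m | A) intertwines the rank-metric automorphism A ↦ P·A·Q + R with right multiplication by M: Λ(A)·M = Λ(P·A·Q + R). -/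
/-!
Right multiplication by `M` sends the row space of `(I | A)` to the row space of `(I | A) * M`,
and a direct block computation gives `(I | A) * M = P⁻¹ * (I | P A Q + R)`. Left multiplication
by the invertible `P⁻¹` does not change a row space.
-/

open Matrix Submodule

namespace Matrix

variable {R : Type*} [CommRing R] {l m n o : Type*} [Fintype l]

theorem vecMulLinear_mul [Fintype m] (X : Matrix l m R) (Y : Matrix m n R) :
    (X * Y).vecMulLinear = Y.vecMulLinear ∘ₗ X.vecMulLinear :=
  LinearMap.ext fun v => (vecMul_vecMul v X Y).symm

theorem map_vecMulLinear_span_range_row [Fintype m] (X : Matrix l m R) (M : Matrix m n R) :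
    (span R (Set.range X.row)).map M.vecMulLinear = span R (Set.range (X * M).row) := by
  rw [← range_vecMulLinear, ← range_vecMulLinear, vecMulLinear_mul, LinearMap.range_comp]

theorem span_range_row_mul_of_isUnit [DecidableEq l] {U : Matrix l l R} (hU : IsUnit U)
    (X : Matrix l m R) :
    span R (Set.range (U * X).row) = span R (Set.range X.row) := by
  rw [← range_vecMulLinear, ← range_vecMulLinear, vecMulLinear_mul, LinearMap.range_comp,
    LinearMap.range_eq_top.mpr (vecMul_surjective_iff_isUnit.mpr hU), Submodule.map_top]

theorem fromCols_one_mul_fromBlocks_inv [Fintype m] [DecidableEq m] [Fintype n]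
    {P : Matrix m m R} (hP : IsUnit P) (A : Matrix m n R) (Q : Matrix n o R) (B : Matrix m o R) :
    fromCols (1 : Matrix m m R) A * fromBlocks P⁻¹ (P⁻¹ * B) 0 Q =
      P⁻¹ * fromCols (1 : Matrix m m R) (P * A * Q + B) := by
  have hPdet : IsUnit P.det := (isUnit_iff_isUnit_det P).mp hP
  rw [fromCols_mul_fromBlocks, mul_fromCols]
  simp [Matrix.mul_add, nonsing_inv_mul_cancel_left P _ hPdet, Matrix.mul_assoc, add_comm]

end Matrix

theorem lifting_intertwines_general (K : Type*) [Field K] (m n : ℕ)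
    (P : Matrix (Fin m) (Fin m) K) (Q : Matrix (Fin n) (Fin n) K)
    (hP : IsUnit P) (hQ : IsUnit Q) (R : Matrix (Fin m) (Fin n) K) :
    IsUnit (Matrix.fromBlocks P⁻¹ (P⁻¹ * R) 0 Q) ∧
    ∀ A : Matrix (Fin m) (Fin n) K,
      Submodule.map (Matrix.fromBlocks P⁻¹ (P⁻¹ * R) 0 Q).vecMulLinear
          (Submodule.span K
            (Set.range fun i =>
              Matrix.fromCols (1 : Matrix (Fin m) (Fin m) K) A i)) =
        Submodule.span K
          (Set.range fun i =>
            Matrix.fromCols (1 : Matrix (Fin m) (Fin m) K) (P * A * Q + R) i) := by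
  have hPinv : IsUnit P⁻¹ := isUnit_nonsing_inv_iff.mpr hP
  refine ⟨isUnit_fromBlocks_zero₂₁.mpr ⟨hPinv, hQ⟩, fun A => ?_⟩
  change _ = span K (Set.range (fromCols 1 (P * A * Q + R)).row)
  rw [← span_range_row_mul_of_isUnit hPinv, ← fromCols_one_mul_fromBlocks_inv hP]
  exact map_vecMulLinear_span_range_row _ _

theorem lifting_intertwines (K : Type*) [Field K] (m n : ℕ) (hm : 0 < m) (hn : 0 < n)
    (P : Matrix (Fin m) (Fin m) K) (Q : Matrix (Fin n) (Fin n) K)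
    (hP : IsUnit P) (hQ : IsUnit Q) (R : Matrix (Fin m) (Fin n) K) :
    IsUnit (Matrix.fromBlocks P⁻¹ (P⁻¹ * R) 0 Q) ∧
    ∀ A : Matrix (Fin m) (Fin n) K,
      Submodule.map (Matrix.fromBlocks P⁻¹ (P⁻¹ * R) 0 Q).vecMulLinear
          (Submodule.span K
            (Set.range fun i =>
              Matrix.fromCols (1 : Matrix (Fin m) (Fin m) K) A i)) =
        Submodule.span K
          (Set.range fun i =>
            Matrix.fromCols (1 : Matrix (Fin m) (Fin m) K) (P * A * Q + R) i) :=
  lifting_intertwines_general K m n P Q hP hQ R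
end

section
/- Let C be a set of 17 subspaces of V = F₂⁷ such that any two distinct members U₁, U₂ of C satisfy the subspace-distance bound dim U₁ + dim U₂ − 2·dim(U₁ ∩ U₂) ≥ 6, and suppose exactly 16 members of C have dimension 3 and one member F has dimension 5 (i.e., C is a (7,17,6)₂ subspace code of dimension distribution (3^16 5^1)). Then the 16 three-dimensional members of C form a partial plane spread S of size 16 in PG(6,2), and every hole of S is contained in F. -/
open Module

abbrev V2 : Type := Fin 7 → ZMod 2

/-- A partial plane spread in PG(6,2): a set of 3-dimensional subspaces of `V2 = F₂⁷`
(the blocks) any two distinct members of which intersect trivially. -/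
def IsPPS (S : Set (Submodule (ZMod 2) V2)) : Prop :=
  (∀ B ∈ S, finrank (ZMod 2) ↥B = 3) ∧
    ∀ B₁ ∈ S, ∀ B₂ ∈ S, B₁ ≠ B₂ → B₁ ⊓ B₂ = ⊥

/-- A point (1-dimensional subspace) of `V2` is a hole of `S` if it is contained
in no block of `S`. -/
def IsHole (S : Set (Submodule (ZMod 2) V2)) (P : Submodule (ZMod 2) V2) : Prop :=
  finrank (ZMod 2) ↥P = 1 ∧ ∀ B ∈ S, ¬ P ≤ B

/-- The number of holes of `S` contained in the subspace `X`. -/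
noncomputable def holeCount (S : Set (Submodule (ZMod 2) V2))
    (X : Submodule (ZMod 2) V2) : ℕ :=
  {P | IsHole S P ∧ P ≤ X}.ncard

/-- The span `⟨N⟩` of the set of holes of `S`. -/
noncomputable def holeSpan (S : Set (Submodule (ZMod 2) V2)) : Submodule (ZMod 2) V2 :=
  sSup {P | IsHole S P}

/-- The number of blocks of `S` contained in the subspace `H`. -/
noncomputable def blocksIn (S : Set (Submodule (ZMod 2) V2))
    (H : Submodule (ZMod 2) V2) : ℕ :=
  {B ∈ S | B ≤ H}.ncard

/-- `spec S i` = the number of hyperplanes of `V2` containing exactly `i` blocks of `S`. -/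
noncomputable def spec (S : Set (Submodule (ZMod 2) V2)) (i : ℕ) : ℕ :=
  {H : Submodule (ZMod 2) V2 | finrank (ZMod 2) ↥H = 6 ∧ blocksIn S H = i}.ncard

/-! The sixteen planes pairwise meet trivially, so they cover `16 · 7 = 112` of the `127`
nonzero vectors of `F₂⁷`, leaving exactly `15` uncovered. Each plane meets the `5`-space `F` in
at most a point, so at most `16` of the `31` nonzero vectors of `F` are covered and at least `15`
are not. Hence every uncovered vector, in particular the generator of every hole, lies in `F`. -/

section Covering

variable {K V : Type*} [Field K] [AddCommGroup V] [Module K V]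

def uncovered (S : Set (Submodule K V)) (X : Submodule K V) : Set V :=
  {v | v ∈ X ∧ v ≠ 0 ∧ ∀ B ∈ S, v ∉ B}

variable [FiniteDimensional K V]

theorem ncard_submodule_diff_zero (W : Submodule K V) :
    ((W : Set V) \ {0}).ncard = Nat.card K ^ finrank K W - 1 := by
  rw [Set.ncard_sdiff_singleton_of_mem W.zero_mem, ← Nat.card_coe_set_eq,
    SetLike.coe_sort_coe, Module.natCard_eq_pow_finrank (K := K)]

variable [Finite K]

theorem ncard_diff_zero_eq_ncard_uncovered_add_sum (S : Finset (Submodule K V))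
    (hS : (S : Set (Submodule K V)).Pairwise fun B B' => B ⊓ B' = ⊥) (X : Submodule K V) :
    ((X : Set V) \ {0}).ncard =
      (uncovered S X).ncard + ∑ B ∈ S, (((B ⊓ X : Submodule K V) : Set V) \ {0}).ncard := by
  have : Finite V := Module.finite_of_finite K
  have hsplit : (X : Set V) \ {0} =
      uncovered S X ∪
        ⋃ B ∈ (S : Set (Submodule K V)), ((B ⊓ X : Submodule K V) : Set V) \ {0} := by
    ext v
    simp only [uncovered, Set.mem_sdiff, Set.mem_union, Set.mem_iUnion, Set.mem_ofPred_eq,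
      SetLike.mem_coe, Submodule.mem_inf, Set.mem_singleton_iff]
    constructor
    · rintro ⟨hvX, hv0⟩
      by_cases hcov : ∃ B ∈ S, v ∈ B
      · obtain ⟨B, hB, hvB⟩ := hcov
        exact Or.inr ⟨B, hB, ⟨hvB, hvX⟩, hv0⟩
      · push Not at hcov
        exact Or.inl ⟨hvX, hv0, hcov⟩
    · rintro (⟨hvX, hv0, -⟩ | ⟨B, -, ⟨-, hvX⟩, hv0⟩) <;> exact ⟨hvX, hv0⟩
  have hdisj : Disjoint (uncovered S X)
      (⋃ B ∈ (S : Set (Submodule K V)), ((B ⊓ X : Submodule K V) : Set V) \ {0}) := by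
    refine Set.disjoint_left.2 fun v hv hvS => ?_
    simp only [Set.mem_iUnion] at hvS
    obtain ⟨B, hB, hvB⟩ := hvS
    exact hv.2.2 B hB hvB.1.1
  have hpair : (S : Set (Submodule K V)).PairwiseDisjoint
      fun B => ((B ⊓ X : Submodule K V) : Set V) \ {0} := by
    intro B hB B' hB' hne
    rw [Function.onFun, Set.disjoint_left]
    intro v hv hv'
    have hvBB' : v ∈ B ⊓ B' := ⟨hv.1.1, hv'.1.1⟩
    rw [hS hB hB' hne, Submodule.mem_bot] at hvBB'
    exact hv.2 hvBB'
  rw [hsplit, Set.ncard_union_eq hdisj, Set.Finite.ncard_biUnion S.finite_toSet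
    (fun _ _ => Set.toFinite _) hpair, finsum_mem_coe_finset]

theorem ncard_uncovered_top_add (S : Finset (Submodule K V))
    (hS : (S : Set (Submodule K V)).Pairwise fun B B' => B ⊓ B' = ⊥) {k : ℕ}
    (hk : ∀ B ∈ S, finrank K B = k) :
    (uncovered (S : Set (Submodule K V)) ⊤).ncard + S.card * (Nat.card K ^ k - 1) =
      Nat.card K ^ finrank K V - 1 := by
  have h := ncard_diff_zero_eq_ncard_uncovered_add_sum S hS ⊤
  simp only [inf_top_eq, ncard_submodule_diff_zero, finrank_top] at h
  rw [h, Finset.sum_congr rfl fun B hB => by rw [hk B hB], Finset.sum_const, smul_eq_mul]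

theorem le_ncard_uncovered_add (S : Finset (Submodule K V))
    (hS : (S : Set (Submodule K V)).Pairwise fun B B' => B ⊓ B' = ⊥) (X : Submodule K V)
    (hX : ∀ B ∈ S, finrank K ↥(B ⊓ X) ≤ 1) :
    Nat.card K ^ finrank K X - 1 ≤
      (uncovered (S : Set (Submodule K V)) X).ncard + S.card * (Nat.card K - 1) := by
  rw [← ncard_submodule_diff_zero, ncard_diff_zero_eq_ncard_uncovered_add_sum S hS X]
  gcongr
  rw [← smul_eq_mul]
  refine Finset.sum_le_card_nsmul _ _ _ fun B hB => ?_
  rw [ncard_submodule_diff_zero]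
  have : Nat.card K ^ finrank K ↥(B ⊓ X) ≤ Nat.card K ^ 1 :=
    Nat.pow_le_pow_right Nat.card_pos (hX B hB)
  rw [pow_one] at this
  omega

theorem uncovered_top_subset_of_ncard_le {S : Set (Submodule K V)} {X : Submodule K V}
    (h : (uncovered S ⊤).ncard ≤ (uncovered S X).ncard) : uncovered S ⊤ ⊆ X := by
  have : Finite V := Module.finite_of_finite K
  have hsub : uncovered S X ⊆ uncovered S ⊤ := fun v hv => ⟨trivial, hv.2⟩
  rw [← Set.eq_of_subset_of_ncard_le hsub h]
  exact fun v hv => hv.1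

end Covering

theorem IsHole.le_of_uncovered_subset {S : Set (Submodule (ZMod 2) V2)}
    {P X : Submodule (ZMod 2) V2} (hP : IsHole S P) (h : uncovered S ⊤ ⊆ X) : P ≤ X := by
  intro w hw
  by_cases hw0 : w = 0
  · simp [hw0]
  refine h ⟨trivial, hw0, fun B hB hwB => hP.2 B hB ?_⟩
  rw [eq_span_singleton_of_mem_of_finrank_eq_one hP.1 hw hw0]
  exact (Submodule.span_singleton_le_iff_mem _ _).2 hwB

theorem subspace_code_3_16_5_1 (C : Set (Submodule (ZMod 2) V2))
    (hcard : C.ncard = 17)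
    (hdist : ∀ U₁ ∈ C, ∀ U₂ ∈ C, U₁ ≠ U₂ →
      2 * finrank (ZMod 2) ↥(U₁ ⊓ U₂) + 6 ≤
        finrank (ZMod 2) ↥U₁ + finrank (ZMod 2) ↥U₂)
    (F : Submodule (ZMod 2) V2) (hF : F ∈ C) (hF5 : finrank (ZMod 2) ↥F = 5)
    (h3 : {U ∈ C | finrank (ZMod 2) ↥U = 3} = C \ {F}) :
    IsPPS {U ∈ C | finrank (ZMod 2) ↥U = 3} ∧
    {U ∈ C | finrank (ZMod 2) ↥U = 3}.ncard = 16 ∧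
    ∀ P : Submodule (ZMod 2) V2,
      IsHole {U ∈ C | finrank (ZMod 2) ↥U = 3} P → P ≤ F := by
  set S := {U ∈ C | finrank (ZMod 2) ↥U = 3}
  have hS16 : S.ncard = 16 := by rw [h3, Set.ncard_sdiff_singleton_of_mem hF, hcard]
  have hPPS : IsPPS S := by
    refine ⟨fun B hB => hB.2, fun B₁ h₁ B₂ h₂ hne => Submodule.finrank_eq_zero.mp ?_⟩
    have := hdist B₁ h₁.1 B₂ h₂.1 hne
    rw [h₁.2, h₂.2] at this
    omega
  refine ⟨hPPS, hS16, fun P hP => hP.le_of_uncovered_subset ?_⟩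
  obtain ⟨T, hT⟩ := (Set.finite_of_ncard_ne_zero (s := S) (by omega)).exists_finset_coe
  have hTcard : T.card = 16 := by rw [← hS16, ← hT, Set.ncard_coe_finset]
  have hpair : (T : Set (Submodule (ZMod 2) V2)).Pairwise fun B B' => B ⊓ B' = ⊥ := by
    rw [hT]
    exact hPPS.2
  have hmeet : ∀ B ∈ T, finrank (ZMod 2) ↥(B ⊓ F) ≤ 1 := by
    intro B hB
    have hBS : B ∈ S := by rw [← hT]; exact hB
    have hBF : B ≠ F := by
      rintro rfl
      have := hBS.2
      omega
    have := hdist B hBS.1 F hF hBF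
    rw [hBS.2, hF5] at this
    omega
  have htop := ncard_uncovered_top_add T hpair fun B hB => hPPS.1 B (by rw [← hT]; exact hB)
  have hF' := le_ncard_uncovered_add T hpair F hmeet
  rw [hT] at htop hF'
  simp only [hTcard, hF5, Nat.card_zmod, Module.finrank_fin_fun] at htop hF'
  exact uncovered_top_subset_of_ncard_le (by omega)
end
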